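/- arXiv:1606.07643 — 3 statements merged into one kernel-verified Lean document; each statement's English description precedes it below -/
import Mathlib

section
/- Let f : [0,∞) → [0,∞) satisfy f(0) = 0 and α ≤ f'(s) ≤ β for all s > 0 with 0 < α ≤ β, and let ν(s) = f(s)/s for s > 0. Define h : ℝ³ → ℝ³ by h(r) = ν(|r|) r for r ≠ 0 and h(0) = 0. Then h is strongly monotone: (h(r) − h(t)) · (r − t) ≥ α |r − t|² for all r, t ∈ ℝ³. -/
/-!
Writing `g s = f s - α s`, the bound `α ≤ f'` makes `g` monotone with `g 0 = 0`, and away from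
the origin `h r = α • r + φ ‖r‖ • r` with `φ s = g s / s ≥ 0`. The radial map `r ↦ φ ‖r‖ • r`
is monotone because `s ↦ φ s * s = g s` is: by Cauchy–Schwarz,
`⟪φ a • r - φ b • t, r - t⟫ ≥ (φ a * a - φ b * b) * (a - b) ≥ 0` for `a = ‖r‖`, `b = ‖t‖`.
-/

open RealInnerProductSpace

theorem monotoneOn_sub_const_mul_of_le_hasDerivAt {D : Set ℝ} (hD : Convex ℝ D)
    {f f' : ℝ → ℝ} {α : ℝ} (hf : ContinuousOn f D)
    (hderiv : ∀ x ∈ interior D, HasDerivAt f (f' x) x)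
    (hbound : ∀ x ∈ interior D, α ≤ f' x) :
    MonotoneOn (fun s => f s - α * s) D :=
  monotoneOn_of_hasDerivWithinAt_nonneg hD (hf.sub (continuousOn_const.mul continuousOn_id))
    (fun x hx => ((hderiv x hx).sub ((hasDerivAt_id x).const_mul α)).hasDerivWithinAt)
    (fun x hx => by simpa using hbound x hx)

theorem MonotoneOn.sub_mul_sub_nonneg {g : ℝ → ℝ} {D : Set ℝ} (hg : MonotoneOn g D)
    {x y : ℝ} (hx : x ∈ D) (hy : y ∈ D) : 0 ≤ (g x - g y) * (x - y) := by
  rcases le_total x y with hxy | hyx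
  · exact mul_nonneg_of_nonpos_of_nonpos (sub_nonpos.2 (hg hx hy hxy)) (sub_nonpos.2 hxy)
  · exact mul_nonneg (sub_nonneg.2 (hg hy hx hyx)) (sub_nonneg.2 hyx)

section Radial

variable {E : Type*} [NormedAddCommGroup E] [InnerProductSpace ℝ E]

theorem inner_smul_sub_smul_sub_eq (a b : ℝ) (r t : E) :
    ⟪a • r - b • t, r - t⟫ = a * ‖r‖ ^ 2 + b * ‖t‖ ^ 2 - (a + b) * ⟪r, t⟫ := by
  simp only [inner_sub_left, inner_sub_right, real_inner_smul_left, real_inner_self_eq_norm_sq,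
    real_inner_comm r t]
  ring

theorem inner_radial_sub_radial_nonneg {φ : ℝ → ℝ} (hφ : ∀ s, 0 ≤ s → 0 ≤ φ s)
    (hmono : MonotoneOn (fun s => φ s * s) (Set.Ici 0)) (r t : E) :
    0 ≤ ⟪φ ‖r‖ • r - φ ‖t‖ • t, r - t⟫ := by
  have hcs : ⟪r, t⟫ ≤ ‖r‖ * ‖t‖ := real_inner_le_norm r t
  have hsum : 0 ≤ φ ‖r‖ + φ ‖t‖ := add_nonneg (hφ _ (norm_nonneg r)) (hφ _ (norm_nonneg t))
  have hprod := hmono.sub_mul_sub_nonneg (Set.mem_Ici.2 (norm_nonneg r))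
    (Set.mem_Ici.2 (norm_nonneg t))
  rw [inner_smul_sub_smul_sub_eq]
  nlinarith [mul_le_mul_of_nonneg_left hcs hsum]

end Radial

theorem stmt2_general (f f' ν : ℝ → ℝ) (α β : ℝ)
    (hf0 : f 0 = 0)
    (hfc : ContinuousOn f (Set.Ici 0))
    (hderiv : ∀ s > (0:ℝ), HasDerivAt f (f' s) s)
    (hbound : ∀ s > (0:ℝ), α ≤ f' s ∧ f' s ≤ β)
    (hν : ∀ s > (0:ℝ), ν s = f s / s)
    (h : EuclideanSpace ℝ (Fin 3) → EuclideanSpace ℝ (Fin 3))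
    (hh : ∀ r : EuclideanSpace ℝ (Fin 3), r ≠ 0 → h r = ν ‖r‖ • r)
    (hh0 : h 0 = 0) :
    ∀ r t : EuclideanSpace ℝ (Fin 3), α * ‖r - t‖ ^ 2 ≤ ⟪h r - h t, r - t⟫ := by
  have hg : MonotoneOn (fun s => f s - α * s) (Set.Ici 0) :=
    monotoneOn_sub_const_mul_of_le_hasDerivAt (convex_Ici 0) hfc
      (fun x hx => hderiv x (by simpa using hx)) (fun x hx => (hbound x (by simpa using hx)).1)
  -- at `s = 0` the junk value `x / 0 = 0` agrees with `g 0 = 0`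
  set φ : ℝ → ℝ := fun s => (f s - α * s) / s
  have hφ_mul : ∀ s ∈ Set.Ici (0:ℝ), φ s * s = f s - α * s := by
    intro s hs
    rcases (Set.mem_Ici.1 hs).eq_or_lt with rfl | hs
    · simp [hf0]
    · exact div_mul_cancel₀ _ hs.ne'
  have hφ_nonneg : ∀ s, 0 ≤ s → 0 ≤ φ s := fun s hs =>
    div_nonneg (by simpa [hf0] using hg (Set.mem_Ici.2 le_rfl) hs hs) hs
  have hsplit : ∀ r, h r = α • r + φ ‖r‖ • r := by
    intro r
    rcases eq_or_ne r 0 with rfl | hr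
    · simp [hh0]
    have hr' : 0 < ‖r‖ := norm_pos_iff.2 hr
    rw [hh r hr, hν _ hr', ← add_smul]
    congr 1
    simp only [φ]
    field_simp
    ring
  intro r t
  have key := inner_radial_sub_radial_nonneg hφ_nonneg
    (hg.congr fun s hs => (hφ_mul s hs).symm) r t
  rw [hsplit r, hsplit t,
    show α • r + φ ‖r‖ • r - (α • t + φ ‖t‖ • t) = α • (r - t) + (φ ‖r‖ • r - φ ‖t‖ • t) by
      module,
    inner_add_left, real_inner_smul_left, real_inner_self_eq_norm_sq]
  linarith

/-- the vector nonlinearity `h(r) = ν(|r|) r` (with `h 0 = 0`) built from a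
material law `f` with `f 0 = 0` and `α ≤ f' ≤ β` on `(0,∞)` is strongly monotone with
constant `α`. -/
theorem stmt2 (f f' ν : ℝ → ℝ) (α β : ℝ) (hα : 0 < α) (hαβ : α ≤ β)
    (hrange : ∀ s ∈ Set.Ici (0:ℝ), 0 ≤ f s)
    (hf0 : f 0 = 0)
    (hfc : ContinuousOn f (Set.Ici 0))
    (hderiv : ∀ s > (0:ℝ), HasDerivAt f (f' s) s)
    (hbound : ∀ s > (0:ℝ), α ≤ f' s ∧ f' s ≤ β)
    (hν : ∀ s > (0:ℝ), ν s = f s / s)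
    (h : EuclideanSpace ℝ (Fin 3) → EuclideanSpace ℝ (Fin 3))
    (hh : ∀ r : EuclideanSpace ℝ (Fin 3), r ≠ 0 → h r = ν ‖r‖ • r)
    (hh0 : h 0 = 0) :
    ∀ r t : EuclideanSpace ℝ (Fin 3), α * ‖r - t‖ ^ 2 ≤ ⟪h r - h t, r - t⟫ :=
  stmt2_general f f' ν α β hf0 hfc hderiv hbound hν h hh hh0
end

section
/- Let f : [0,∞) → [0,∞) satisfy f(0) = 0 and α ≤ f'(s) ≤ β for all s > 0 with 0 < α ≤ β, ν(s) = f(s)/s for s > 0, and h(r) = ν(|r|) r (with h(0) = 0). Then h is Lipschitz continuous with constant 3β: |h(r) − h(t)| ≤ 3β |r − t| for all r, t ∈ ℝ³. -/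
open RealInnerProductSpace

/-!
Write `h r = ν ‖r‖ • r` with `ν s = f s / s`. The bounds on `f'` make `f` `β`-Lipschitz on
`[0, ∞)`, so `|ν| ≤ β` because `f 0 = 0`. For `‖t‖ ≤ ‖r‖` split
`ν ‖r‖ • r - ν ‖t‖ • t = ν ‖r‖ • (r - t) + (ν ‖r‖ - ν ‖t‖) • t`: the first part has norm at most
`β ‖r - t‖`, and writing `(ν a - ν b) b = (b (f a - f b) - f b (a - b)) / a` shows that the
second has norm at most `2β (‖r‖ - ‖t‖) ≤ 2β ‖r - t‖`.
-/

open Set NNReal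

theorem Convex.lipschitzOnWith_of_abs_deriv_le {D : Set ℝ} (hD : Convex ℝ D) {f f' : ℝ → ℝ}
    {K : ℝ≥0} (hfc : ContinuousOn f D) (hderiv : ∀ s ∈ interior D, HasDerivAt f (f' s) s)
    (hbound : ∀ s ∈ interior D, |f' s| ≤ K) : LipschitzOnWith K f D := by
  have hdiff : DifferentiableOn ℝ f (interior D) := fun s hs =>
    (hderiv s hs).differentiableAt.differentiableWithinAt
  have hderiv_eq : ∀ s ∈ interior D, deriv f s = f' s := fun s hs => (hderiv s hs).deriv
  refine LipschitzOnWith.of_le_add_mul K fun x hx y hy => ?_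
  rw [Real.dist_eq]
  rcases le_total x y with hxy | hyx
  · have := hD.mul_sub_le_image_sub_of_le_deriv hfc hdiff (C := -K)
      (fun s hs => hderiv_eq s hs ▸ neg_le_of_abs_le (hbound s hs)) x hx y hy hxy
    rw [abs_of_nonpos (sub_nonpos.2 hxy)]
    linarith
  · have := hD.image_sub_le_mul_sub_of_deriv_le hfc hdiff (C := K)
      (fun s hs => hderiv_eq s hs ▸ le_of_abs_le (hbound s hs)) y hy x hx hyx
    rw [abs_of_nonneg (sub_nonneg.2 hyx)]
    linarith

section RadialMap

variable {E : Type*} [NormedAddCommGroup E] [NormedSpace ℝ E]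

/-- The nonlinearity `h(r) = ν(‖r‖) r` with `ν s = g s / s`; at `r = 0` it is `0` whatever `g`
is. -/
noncomputable def radialMap (g : ℝ → ℝ) (r : E) : E := (g ‖r‖ / ‖r‖) • r

variable {g : ℝ → ℝ} {K : ℝ≥0}

theorem abs_div_le_of_lipschitzOnWith (hg : LipschitzOnWith K g (Ici 0)) (hg0 : g 0 = 0)
    {a : ℝ} (ha : 0 ≤ a) : |g a / a| ≤ K := by
  rcases ha.eq_or_lt with rfl | ha
  · simp
  rw [abs_div, abs_of_pos ha, div_le_iff₀ ha]
  simpa [hg0, Real.dist_eq, abs_of_pos ha] using hg.dist_le_mul a ha.le 0 self_mem_Ici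

theorem abs_sub_div_mul_le_of_lipschitzOnWith (hg : LipschitzOnWith K g (Ici 0)) (hg0 : g 0 = 0)
    {a b : ℝ} (hb : 0 ≤ b) (hba : b ≤ a) : |(g a / a - g b / b) * b| ≤ 2 * K * (a - b) := by
  rcases hb.eq_or_lt with rfl | hb
  · simp only [mul_zero, abs_zero, sub_zero]
    positivity
  have ha : 0 < a := hb.trans_le hba
  have hgab : |g a - g b| ≤ K * (a - b) := by
    simpa [Real.dist_eq, abs_of_nonneg (sub_nonneg.2 hba)] using
      hg.dist_le_mul a ha.le b hb.le
  have hgb : |g b| ≤ K * b := by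
    simpa [hg0, abs_of_pos hb] using hg.dist_le_mul b hb.le 0 self_mem_Ici
  calc |(g a / a - g b / b) * b| = |b * (g a - g b) - g b * (a - b)| / a := by
        rw [eq_div_iff ha.ne', ← abs_of_pos ha, ← abs_mul, abs_of_pos ha]
        congr 1
        field_simp
        ring
    _ ≤ (b * (K * (a - b)) + K * b * (a - b)) / a := by
        gcongr
        refine (abs_sub _ _).trans (add_le_add ?_ ?_)
        · rw [abs_mul, abs_of_pos hb]
          gcongr
        · rw [abs_mul, abs_of_nonneg (sub_nonneg.2 hba)]
          gcongr
    _ = 2 * K * (a - b) * (b / a) := by ring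
    _ ≤ 2 * K * (a - b) :=
        mul_le_of_le_one_right (mul_nonneg (by positivity) (sub_nonneg.2 hba))
          (div_le_one_of_le₀ hba ha.le)

theorem norm_radialMap_sub_le_of_norm_le (hg : LipschitzOnWith K g (Ici 0)) (hg0 : g 0 = 0)
    {r t : E} (hrt : ‖t‖ ≤ ‖r‖) : ‖radialMap g r - radialMap g t‖ ≤ 3 * K * ‖r - t‖ := by
  set ν : ℝ → ℝ := fun s => g s / s
  have hsplit : radialMap g r - radialMap g t = ν ‖r‖ • (r - t) + (ν ‖r‖ - ν ‖t‖) • t := by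
    simp only [radialMap, ν, smul_sub, sub_smul]
    abel
  calc ‖radialMap g r - radialMap g t‖
      ≤ |ν ‖r‖| * ‖r - t‖ + |(ν ‖r‖ - ν ‖t‖) * ‖t‖| := by
        rw [hsplit, abs_mul, abs_norm]
        refine (norm_add_le _ _).trans_eq ?_
        rw [norm_smul, norm_smul, Real.norm_eq_abs, Real.norm_eq_abs]
    _ ≤ K * ‖r - t‖ + 2 * K * (‖r‖ - ‖t‖) := by
        gcongr
        · exact abs_div_le_of_lipschitzOnWith hg hg0 (norm_nonneg r)
        · exact abs_sub_div_mul_le_of_lipschitzOnWith hg hg0 (norm_nonneg t) hrt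
    _ ≤ K * ‖r - t‖ + 2 * K * ‖r - t‖ := by gcongr; exact norm_sub_norm_le r t
    _ = 3 * K * ‖r - t‖ := by ring

theorem lipschitzWith_radialMap (hg : LipschitzOnWith K g (Ici 0)) (hg0 : g 0 = 0) :
    LipschitzWith (3 * K) (radialMap g : E → E) := by
  refine LipschitzWith.of_dist_le_mul fun r t => ?_
  rw [dist_eq_norm, dist_eq_norm]
  push_cast
  rcases le_total ‖t‖ ‖r‖ with htr | hrt
  · exact norm_radialMap_sub_le_of_norm_le hg hg0 htr
  · rw [norm_sub_rev, norm_sub_rev r]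
    exact norm_radialMap_sub_le_of_norm_le hg hg0 hrt

end RadialMap

theorem stmt3_general (f f' ν : ℝ → ℝ) (α β : ℝ) (hα : 0 < α) (hαβ : α ≤ β)
    (hf0 : f 0 = 0)
    (hfc : ContinuousOn f (Set.Ici 0))
    (hderiv : ∀ s > (0:ℝ), HasDerivAt f (f' s) s)
    (hbound : ∀ s > (0:ℝ), α ≤ f' s ∧ f' s ≤ β)
    (hν : ∀ s > (0:ℝ), ν s = f s / s)
    (h : EuclideanSpace ℝ (Fin 3) → EuclideanSpace ℝ (Fin 3))
    (hh : ∀ r : EuclideanSpace ℝ (Fin 3), r ≠ 0 → h r = ν ‖r‖ • r)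
    (hh0 : h 0 = 0) :
    ∀ r t : EuclideanSpace ℝ (Fin 3), ‖h r - h t‖ ≤ 3 * β * ‖r - t‖ := by
  have hβ : 0 ≤ β := hα.le.trans hαβ
  have hf_lip : LipschitzOnWith β.toNNReal f (Ici 0) := by
    refine (convex_Ici 0).lipschitzOnWith_of_abs_deriv_le (f' := f') hfc ?_ ?_ <;>
      intro s hs <;> rw [interior_Ici] at hs
    · exact hderiv s hs
    · rw [Real.coe_toNNReal β hβ, abs_of_pos (hα.trans_le (hbound s hs).1)]
      exact (hbound s hs).2
  have hh_eq : h = radialMap f := by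
    funext r
    rcases eq_or_ne r 0 with rfl | hr
    · simp [radialMap, hh0]
    · rw [hh r hr, hν _ (norm_pos_iff.2 hr), radialMap]
  intro r t
  simpa [hh_eq, dist_eq_norm, Real.coe_toNNReal β hβ] using
    (lipschitzWith_radialMap hf_lip hf0).dist_le_mul r t

/-- the vector nonlinearity `h(r) = ν(|r|) r` (with `h 0 = 0`) built from a
material law `f` with `f 0 = 0` and `α ≤ f' ≤ β` on `(0,∞)` is Lipschitz continuous with
constant `3β`. -/
theorem stmt3 (f f' ν : ℝ → ℝ) (α β : ℝ) (hα : 0 < α) (hαβ : α ≤ β)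
    (hrange : ∀ s ∈ Set.Ici (0:ℝ), 0 ≤ f s)
    (hf0 : f 0 = 0)
    (hfc : ContinuousOn f (Set.Ici 0))
    (hderiv : ∀ s > (0:ℝ), HasDerivAt f (f' s) s)
    (hbound : ∀ s > (0:ℝ), α ≤ f' s ∧ f' s ≤ β)
    (hν : ∀ s > (0:ℝ), ν s = f s / s)
    (h : EuclideanSpace ℝ (Fin 3) → EuclideanSpace ℝ (Fin 3))
    (hh : ∀ r : EuclideanSpace ℝ (Fin 3), r ≠ 0 → h r = ν ‖r‖ • r)
    (hh0 : h 0 = 0) :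
    ∀ r t : EuclideanSpace ℝ (Fin 3), ‖h r - h t‖ ≤ 3 * β * ‖r - t‖ :=
  stmt3_general f f' ν α β hα hαβ hf0 hfc hderiv hbound hν h hh hh0
end

section
/- Let f : [0,∞) → [0,∞) be continuously differentiable with f(0) = 0, α ≤ f'(s) ≤ β for all s (0 < α ≤ β), and set ν(s) = f(s)/s for s > 0, ν(0) = f'(0). Define the differential reluctivity tensor ν_d(r) = ν(|r|) I + (ν'(|r|)/|r|) r ⊗ r for r ≠ 0 and ν_d(0) = ν(0) I. Then there exist constants 0 < α_d ≤ β_d such that for all r, s ∈ ℝ³: |ν_d(s)| ≤ β_d (operator norm bound) and rᵀ ν_d(s) r ≥ α_d |r|². -/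
/-!
`ν_d(s) = a I + b s ⊗ s` with `a = ν(|s|)`, `b = ν'(|s|)/|s|` acts as `a` on `s⊥` and as
`a + b|s|² = ν(|s|) + |s| ν'(|s|) = f'(|s|)` on `ℝ s`. Both eigenvalues lie in `[α, β]`: the
second by hypothesis, the first because `ν(t) = f(t)/t` is the slope of the secant of `f` over
`[0, t]`, hence lies between the bounds for `f'`. So one can take `α_d = α` and `β_d = β`.
-/

open RealInnerProductSpace Set Filter Topology

lemma mul_le_of_le_hasDerivWithinAt_Ici {f f' : ℝ → ℝ} {C : ℝ} (hf0 : f 0 = 0)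
    (hderiv : ∀ s ∈ Ici (0 : ℝ), HasDerivWithinAt f (f' s) (Ici 0) s)
    (hC : ∀ s ∈ Ici (0 : ℝ), C ≤ f' s) {t : ℝ} (ht : 0 ≤ t) : C * t ≤ f t := by
  have hg : ∀ s ∈ Ici (0 : ℝ), HasDerivWithinAt (fun s => f s - C * s) (f' s - C) (Ici 0) s :=
    fun s hs => by simpa using (hderiv s hs).fun_sub ((hasDerivWithinAt_id s _).const_mul C)
  have hmono : MonotoneOn (fun s => f s - C * s) (Ici 0) :=
    monotoneOn_of_hasDerivWithinAt_nonneg (f' := fun s => f' s - C) (convex_Ici 0)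
      (fun s hs => (hg s hs).continuousWithinAt)
      (fun s hs => (hg s (interior_subset hs)).mono interior_subset)
      (fun s hs => sub_nonneg.2 (hC s (interior_subset hs)))
  simpa [hf0] using hmono self_mem_Ici ht ht

lemma div_mem_Icc_of_hasDerivWithinAt_Ici {f f' : ℝ → ℝ} {α β : ℝ} (hf0 : f 0 = 0)
    (hderiv : ∀ s ∈ Ici (0 : ℝ), HasDerivWithinAt f (f' s) (Ici 0) s)
    (hbound : ∀ s ∈ Ici (0 : ℝ), α ≤ f' s ∧ f' s ≤ β) {t : ℝ} (ht : 0 < t) :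
    f t / t ∈ Icc α β := by
  have hlo := mul_le_of_le_hasDerivWithinAt_Ici hf0 hderiv (fun s hs => (hbound s hs).1) ht.le
  have hhi := mul_le_of_le_hasDerivWithinAt_Ici (f := -f) (f' := -f') (by simp [hf0])
    (fun s hs => (hderiv s hs).neg) (fun s hs => neg_le_neg (hbound s hs).2) ht.le
  simp only [Pi.neg_apply, neg_mul, neg_le_neg_iff] at hhi
  rw [mem_Icc, le_div_iff₀ ht, div_le_iff₀ ht]
  exact ⟨hlo, hhi⟩

lemma HasDerivAt.mul_eq_sub_of_eventuallyEq_div {f ν : ℝ → ℝ} {f' ν' t : ℝ}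
    (hf : HasDerivAt f f' t) (hν : ν =ᶠ[𝓝 t] fun s => f s / s) (hν' : HasDerivAt ν ν' t)
    (ht : t ≠ 0) : ν' * t = f' - ν t := by
  have hdiv : HasDerivAt ν ((f' * t - f t * 1) / t ^ 2) t :=
    (hf.div (hasDerivAt_id t) ht).congr_of_eventuallyEq hν
  rw [hν'.unique hdiv, hν.eq_of_nhds]
  field_simp

lemma min_mul_le_mul_add_mul {a c N S q : ℝ} (hN : 0 ≤ N) (hq : 0 ≤ q) (hqS : q ≤ S * N) :
    min a (a + c * S) * N ≤ a * N + c * q := by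
  rcases le_total 0 c with hc | hc
  · nlinarith [min_le_left a (a + c * S)]
  · nlinarith [min_le_right a (a + c * S)]

lemma mul_add_mul_le_max_mul {a c N S q : ℝ} (hN : 0 ≤ N) (hq : 0 ≤ q) (hqS : q ≤ S * N) :
    a * N + c * q ≤ max a (a + c * S) * N := by
  rcases le_total 0 c with hc | hc
  · nlinarith [le_max_right a (a + c * S)]
  · nlinarith [le_max_left a (a + c * S)]

section RankOne

variable {E : Type*} [NormedAddCommGroup E] [InnerProductSpace ℝ E]

noncomputable def scalarAddRankOne (a b : ℝ) (s : E) : E →L[ℝ] E :=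
  a • ContinuousLinearMap.id ℝ E + b • (innerSL ℝ s).smulRight s

lemma scalarAddRankOne_apply (a b : ℝ) (s x : E) :
    scalarAddRankOne a b s x = a • x + (b * ⟪s, x⟫) • s := by
  simp [scalarAddRankOne, mul_smul]

lemma inner_scalarAddRankOne_apply_self (a b : ℝ) (s x : E) :
    ⟪x, scalarAddRankOne a b s x⟫ = a * ‖x‖ ^ 2 + b * ⟪s, x⟫ ^ 2 := by
  rw [scalarAddRankOne_apply, inner_add_right, real_inner_smul_right, real_inner_smul_right,
    real_inner_self_eq_norm_sq, real_inner_comm x s]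
  ring

lemma norm_scalarAddRankOne_apply_sq (a b : ℝ) (s x : E) :
    ‖scalarAddRankOne a b s x‖ ^ 2 =
      a ^ 2 * ‖x‖ ^ 2 + (2 * a * b + b ^ 2 * ‖s‖ ^ 2) * ⟪s, x⟫ ^ 2 := by
  rw [scalarAddRankOne_apply, norm_add_sq_real, norm_smul, norm_smul, real_inner_smul_left,
    real_inner_smul_right, Real.norm_eq_abs, Real.norm_eq_abs, mul_pow, mul_pow, sq_abs, sq_abs,
    real_inner_comm x s]
  ring

lemma real_inner_sq_le_norm_sq_mul_norm_sq (s x : E) :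
    ⟪s, x⟫ ^ 2 ≤ ‖s‖ ^ 2 * ‖x‖ ^ 2 := by
  rw [← mul_pow, ← sq_abs]
  exact pow_le_pow_left₀ (abs_nonneg _) (abs_real_inner_le_norm s x) 2

lemma min_mul_norm_sq_le_inner_scalarAddRankOne_apply_self (a b : ℝ) (s x : E) :
    min a (a + b * ‖s‖ ^ 2) * ‖x‖ ^ 2 ≤ ⟪x, scalarAddRankOne a b s x⟫ := by
  rw [inner_scalarAddRankOne_apply_self]
  exact min_mul_le_mul_add_mul (sq_nonneg _) (sq_nonneg _)
    (real_inner_sq_le_norm_sq_mul_norm_sq s x)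

lemma norm_scalarAddRankOne_le (a b : ℝ) (s : E) :
    ‖scalarAddRankOne a b s‖ ≤ max |a| |a + b * ‖s‖ ^ 2| := by
  set M := max |a| |a + b * ‖s‖ ^ 2|
  have hM : 0 ≤ M := le_max_of_le_left (abs_nonneg a)
  refine ContinuousLinearMap.opNorm_le_bound _ hM fun x => ?_
  refine (pow_le_pow_iff_left₀ (norm_nonneg _) (by positivity) two_ne_zero).1 ?_
  calc ‖scalarAddRankOne a b s x‖ ^ 2
      ≤ max (a ^ 2) (a ^ 2 + (2 * a * b + b ^ 2 * ‖s‖ ^ 2) * ‖s‖ ^ 2) * ‖x‖ ^ 2 := by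
        rw [norm_scalarAddRankOne_apply_sq]
        exact mul_add_mul_le_max_mul (sq_nonneg _) (sq_nonneg _)
          (real_inner_sq_le_norm_sq_mul_norm_sq s x)
    _ = max (a ^ 2) ((a + b * ‖s‖ ^ 2) ^ 2) * ‖x‖ ^ 2 := by congr 2; ring
    _ ≤ (M * ‖x‖) ^ 2 := by
        rw [mul_pow]
        gcongr
        exact max_le (sq_le_sq.2 ((le_max_left _ _).trans (le_abs_self M)))
          (sq_le_sq.2 ((le_max_right _ _).trans (le_abs_self M)))

end RankOne

theorem stmt4_general (f f' ν ν' : ℝ → ℝ) (α β : ℝ) (hα : 0 < α) (hαβ : α ≤ β)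
    (hf0 : f 0 = 0)
    (hderiv : ∀ s ∈ Set.Ici (0:ℝ), HasDerivWithinAt f (f' s) (Set.Ici 0) s)
    (hbound : ∀ s ∈ Set.Ici (0:ℝ), α ≤ f' s ∧ f' s ≤ β)
    (hν : ∀ s > (0:ℝ), ν s = f s / s) (hν0 : ν 0 = f' 0)
    (hν' : ∀ s > (0:ℝ), HasDerivAt ν (ν' s) s)
    (νd : EuclideanSpace ℝ (Fin 3) →
      EuclideanSpace ℝ (Fin 3) →L[ℝ] EuclideanSpace ℝ (Fin 3))
    (hνd : ∀ r : EuclideanSpace ℝ (Fin 3), r ≠ 0 →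
      νd r = ν ‖r‖ • ContinuousLinearMap.id ℝ (EuclideanSpace ℝ (Fin 3)) +
        (ν' ‖r‖ / ‖r‖) • (innerSL ℝ r).smulRight r)
    (hνd0 : νd 0 = ν 0 • ContinuousLinearMap.id ℝ (EuclideanSpace ℝ (Fin 3))) :
    ∃ αd βd : ℝ, 0 < αd ∧ αd ≤ βd ∧
      ∀ s : EuclideanSpace ℝ (Fin 3), ‖νd s‖ ≤ βd ∧
        ∀ r : EuclideanSpace ℝ (Fin 3), αd * ‖r‖ ^ 2 ≤ ⟪r, νd s r⟫ := by
  have hν_mem : ∀ t, 0 ≤ t → ν t ∈ Icc α β := by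
    intro t ht
    rcases ht.eq_or_lt with rfl | ht
    · exact hν0 ▸ hbound 0 self_mem_Ici
    · exact hν t ht ▸ div_mem_Icc_of_hasDerivWithinAt_Ici hf0 hderiv hbound ht
  have hνd_eq : ∀ s, ∃ a b, νd s = scalarAddRankOne a b s ∧
      a ∈ Icc α β ∧ a + b * ‖s‖ ^ 2 ∈ Icc α β := by
    intro s
    rcases eq_or_ne s 0 with rfl | hs
    · exact ⟨ν 0, 0, by simp [hνd0, scalarAddRankOne], hν_mem 0 le_rfl,
        by simpa using hν_mem 0 le_rfl⟩
    have ht : 0 < ‖s‖ := norm_pos_iff.2 hs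
    refine ⟨ν ‖s‖, ν' ‖s‖ / ‖s‖, hνd s hs, hν_mem _ ht.le, ?_⟩
    have hsecant := HasDerivAt.mul_eq_sub_of_eventuallyEq_div
      ((hderiv _ ht.le).hasDerivAt (Ici_mem_nhds ht)) (eventually_of_mem (Ioi_mem_nhds ht) hν)
      (hν' _ ht) ht.ne'
    have heig : ν ‖s‖ + ν' ‖s‖ / ‖s‖ * ‖s‖ ^ 2 = f' ‖s‖ := by
      field_simp
      linarith
    exact heig ▸ hbound _ ht.le
  refine ⟨α, β, hα, hαβ, fun s => ?_⟩
  obtain ⟨a, b, hs, ha, hab⟩ := hνd_eq s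
  rw [hs]
  refine ⟨(norm_scalarAddRankOne_le a b s).trans (max_le ?_ ?_), fun r => ?_⟩
  · exact abs_le.2 ⟨by linarith [ha.1], ha.2⟩
  · exact abs_le.2 ⟨by linarith [hab.1], hab.2⟩
  · exact (mul_le_mul_of_nonneg_right (le_min ha.1 hab.1) (sq_nonneg _)).trans
      (min_mul_norm_sq_le_inner_scalarAddRankOne_apply_self a b s r)

/-- the differential reluctivity tensor
`ν_d(r) = ν(|r|) I + (ν'(|r|)/|r|) r ⊗ r` (with `ν_d(0) = ν(0) I`) is uniformly bounded
(in operator norm) and uniformly elliptic: there are `0 < α_d ≤ β_d` with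
`‖ν_d(s)‖ ≤ β_d` and `rᵀ ν_d(s) r ≥ α_d |r|²` for all `r, s`. -/
theorem stmt4 (f f' ν ν' : ℝ → ℝ) (α β : ℝ) (hα : 0 < α) (hαβ : α ≤ β)
    (hrange : ∀ s ∈ Set.Ici (0:ℝ), 0 ≤ f s)
    (hf0 : f 0 = 0)
    (hderiv : ∀ s ∈ Set.Ici (0:ℝ), HasDerivWithinAt f (f' s) (Set.Ici 0) s)
    (hf'cont : ContinuousOn f' (Set.Ici 0))
    (hbound : ∀ s ∈ Set.Ici (0:ℝ), α ≤ f' s ∧ f' s ≤ β)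
    (hν : ∀ s > (0:ℝ), ν s = f s / s) (hν0 : ν 0 = f' 0)
    (hν' : ∀ s > (0:ℝ), HasDerivAt ν (ν' s) s)
    (νd : EuclideanSpace ℝ (Fin 3) →
      EuclideanSpace ℝ (Fin 3) →L[ℝ] EuclideanSpace ℝ (Fin 3))
    (hνd : ∀ r : EuclideanSpace ℝ (Fin 3), r ≠ 0 →
      νd r = ν ‖r‖ • ContinuousLinearMap.id ℝ (EuclideanSpace ℝ (Fin 3)) +
        (ν' ‖r‖ / ‖r‖) • (innerSL ℝ r).smulRight r)
    (hνd0 : νd 0 = ν 0 • ContinuousLinearMap.id ℝ (EuclideanSpace ℝ (Fin 3))) :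
    ∃ αd βd : ℝ, 0 < αd ∧ αd ≤ βd ∧
      ∀ s : EuclideanSpace ℝ (Fin 3), ‖νd s‖ ≤ βd ∧
        ∀ r : EuclideanSpace ℝ (Fin 3), αd * ‖r‖ ^ 2 ≤ ⟪r, νd s r⟫ :=
  stmt4_general f f' ν ν' α β hα hαβ hf0 hderiv hbound hν hν0 hν' νd hνd hνd0
end
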